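/- Let n, m be positive integers and λ ∈ ℂ. Let W := { (R^T Δ_m + Δ_n S, R^T Λ_m(λ) + Λ_n(λ) S) : S ∈ ℂ^{n×m}, R ∈ ℂ^{m×n} } ⊆ ℂ^{n×m} × ℂ^{n×m}, and let P := { (0, Y) : Y ∈ ℂ^{n×m}, Y_{ij} = 0 unless j = 1 and i ≤ min(n,m) }. Then ℂ^{n×m} × ℂ^{n×m} = W ⊕ P; in particular, every coset of W contains exactly one element of P, and W has codimension min(n,m). -/

import Mathlib

open Matrix

noncomputable section

/-- `Λ_n(λ)`: the `n × n` matrix with `(i,j)` entry `λ` if `i + j = n + 1`, `1` if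
`i + j = n + 2`, and `0` otherwise (1-based indices). -/
def lamM (n : ℕ) (lam : ℂ) : Matrix (Fin n) (Fin n) ℂ :=
  Matrix.of fun i j =>
    if (i : ℕ) + 1 + ((j : ℕ) + 1) = n + 1 then lam
    else if (i : ℕ) + 1 + ((j : ℕ) + 1) = n + 2 then 1 else 0

/-- `Δ_n`: the `n × n` matrix with `(i,j)` entry `1` if `i + j = n + 1` and `0`
otherwise (1-based indices). -/
def delM (n : ℕ) : Matrix (Fin n) (Fin n) ℂ :=
  Matrix.of fun i j => if (i : ℕ) + 1 + ((j : ℕ) + 1) = n + 1 then 1 else 0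

/-- `F_n`: the `n × (n+1)` matrix with `F_n(i,j) = 1` exactly when `j = i`. -/
def FM (n : ℕ) : Matrix (Fin n) (Fin (n + 1)) ℂ :=
  Matrix.of fun i j => if (j : ℕ) = (i : ℕ) then 1 else 0

/-- `G_n`: the `n × (n+1)` matrix with `G_n(i,j) = 1` exactly when `j = i + 1`. -/
def GM (n : ℕ) : Matrix (Fin n) (Fin (n + 1)) ℂ :=
  Matrix.of fun i j => if (j : ℕ) = (i : ℕ) + 1 then 1 else 0

/-- `L_n^{(1)} = [[0, F_nᵀ], [F_n, 0]]`, a symmetric `(2n+1) × (2n+1)` matrix. -/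
def L1M (n : ℕ) : Matrix (Fin (2 * n + 1)) (Fin (2 * n + 1)) ℂ :=
  Matrix.reindex (finSumFinEquiv.trans (finCongr (by omega)))
    (finSumFinEquiv.trans (finCongr (by omega)))
    (Matrix.fromBlocks 0 (FM n)ᵀ (FM n) 0)

/-- `L_n^{(2)} = [[0, G_nᵀ], [G_n, 0]]`, a symmetric `(2n+1) × (2n+1)` matrix. -/
def L2M (n : ℕ) : Matrix (Fin (2 * n + 1)) (Fin (2 * n + 1)) ℂ :=
  Matrix.reindex (finSumFinEquiv.trans (finCongr (by omega)))
    (finSumFinEquiv.trans (finCongr (by omega)))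
    (Matrix.fromBlocks 0 (GM n)ᵀ (GM n) 0)

theorem lamM_isSymm (n : ℕ) (lam : ℂ) : (lamM n lam).IsSymm := by
  unfold Matrix.IsSymm lamM
  ext i j
  simp only [Matrix.transpose_apply, Matrix.of_apply]
  split_ifs <;> first | rfl | omega

theorem delM_isSymm (n : ℕ) : (delM n).IsSymm := by
  unfold Matrix.IsSymm delM
  ext i j
  simp only [Matrix.transpose_apply, Matrix.of_apply]
  split_ifs <;> first | rfl | omega

theorem L1M_isSymm (n : ℕ) : (L1M n).IsSymm := by
  unfold Matrix.IsSymm L1M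
  rw [Matrix.transpose_reindex, Matrix.fromBlocks_transpose]
  simp

theorem L2M_isSymm (n : ℕ) : (L2M n).IsSymm := by
  unfold Matrix.IsSymm L2M
  rw [Matrix.transpose_reindex, Matrix.fromBlocks_transpose]
  simp

/-- The type of canonical summands: `H_k(λ)`, `K_k`, `L_k`. -/
inductive CanType where
  | H : ℕ → ℂ → CanType
  | K : ℕ → CanType
  | L : ℕ → CanType

/-- The size of a canonical pair. -/
def CanType.size : CanType → ℕ
  | .H k _ => k
  | .K k => k
  | .L k => 2 * k + 1

/-- The size parameter of a canonical pair. -/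
def CanType.param : CanType → ℕ
  | .H k _ => k
  | .K k => k
  | .L k => k

/-- The first matrix of a canonical pair. -/
def CanType.A : (c : CanType) → Matrix (Fin c.size) (Fin c.size) ℂ
  | .H k _ => delM k
  | .K k => lamM k 0
  | .L k => L1M k

/-- The second matrix of a canonical pair. -/
def CanType.B : (c : CanType) → Matrix (Fin c.size) (Fin c.size) ℂ
  | .H k lam => lamM k lam
  | .K k => delM k
  | .L k => L2M k

/-- Congruence of pairs of square complex matrices (over possibly different index
types): `(A', B') = (Sᵀ A S, Sᵀ B S)` for some invertible `S`. -/
def CongruentPairs {ι κ : Type} [Fintype ι] [Fintype κ] [DecidableEq ι] [DecidableEq κ]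
    (p : Matrix ι ι ℂ × Matrix ι ι ℂ) (q : Matrix κ κ ℂ × Matrix κ κ ℂ) : Prop :=
  ∃ S : Matrix ι κ ℂ, (∃ T : Matrix κ ι ℂ, S * T = 1 ∧ T * S = 1) ∧
    q.1 = Sᵀ * p.1 * S ∧ q.2 = Sᵀ * p.2 * S

/-- The linear map `(S, R) ↦ (Rᵀ A_j + A_i S, Rᵀ B_j + B_i S)`. -/
def offMap {ι κ : Type} [Fintype ι] [Fintype κ] (Ai Bi : Matrix ι ι ℂ)
    (Aj Bj : Matrix κ κ ℂ) :
    (Matrix ι κ ℂ × Matrix κ ι ℂ) →ₗ[ℂ] (Matrix ι κ ℂ × Matrix ι κ ℂ) where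
  toFun SR := (SR.2ᵀ * Aj + Ai * SR.1, SR.2ᵀ * Bj + Bi * SR.1)
  map_add' x y := by
    simp only [Prod.fst_add, Prod.snd_add, Matrix.transpose_add, Matrix.add_mul,
      Matrix.mul_add, Prod.mk_add_mk, Prod.ext_iff]
    constructor <;> abel
  map_smul' c x := by
    simp only [Prod.smul_fst, Prod.smul_snd, Matrix.transpose_smul, Matrix.smul_mul,
      Matrix.mul_smul, RingHom.id_apply, Prod.smul_mk, smul_add]

/-- `W = {(Rᵀ A_j + A_i S, Rᵀ B_j + B_i S) : S, R}`. -/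
def WSpace {ι κ : Type} [Fintype ι] [Fintype κ] (Ai Bi : Matrix ι ι ℂ)
    (Aj Bj : Matrix κ κ ℂ) : Submodule ℂ (Matrix ι κ ℂ × Matrix ι κ ℂ) :=
  LinearMap.range (offMap Ai Bi Aj Bj)

/-- The space of pairs of (rectangular) matrices supported on given sets of positions. -/
def entryPattern {ι κ : Type} (S1 S2 : Set (ι × κ)) :
    Submodule ℂ (Matrix ι κ ℂ × Matrix ι κ ℂ) where
  carrier := {x | (∀ i j, (i, j) ∉ S1 → x.1 i j = 0) ∧ (∀ i j, (i, j) ∉ S2 → x.2 i j = 0)}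
  add_mem' := by
    rintro a b ⟨ha1, ha2⟩ ⟨hb1, hb2⟩
    exact ⟨fun i j h => by show a.1 i j + b.1 i j = 0; rw [ha1 i j h, hb1 i j h, add_zero],
      fun i j h => by show a.2 i j + b.2 i j = 0; rw [ha2 i j h, hb2 i j h, add_zero]⟩
  zero_mem' := ⟨fun _ _ _ => rfl, fun _ _ _ => rfl⟩
  smul_mem' := by
    rintro c a ⟨ha1, ha2⟩
    exact ⟨fun i j h => by show c * a.1 i j = 0; rw [ha1 i j h, mul_zero],
      fun i j h => by show c * a.2 i j = 0; rw [ha2 i j h, mul_zero]⟩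


end

noncomputable section

/-!
Write `J` for the nilpotent Jordan block. Since `Δ² = 1` and `Λ(λ) = λΔ + ΔJ = λΔ + JᵀΔ`,
the substitution `V = ΔS` shows that `(X, Y) ∈ W` exactly when `Y - λX - XJ` lies in the image
of the Sylvester map `V ↦ JᵀV - VJ`, so it is enough to show that this image is complementary
to the matrices supported on the leading column. Every antidiagonal sum `∑_{a+b=s} Z a b` with
`s < min n m` vanishes on the image, while on the leading column it is the single entry `Z s 0`.
Conversely `JᵀE_{ab} - E_{ab}J = E_{a+1,b} - E_{a,b+1}`, so modulo the image each matrix unit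
slides along its antidiagonal into the first column, or out of the matrix through column `m`.
-/

open Finset

namespace Submodule

variable {R M M₁ M₂ : Type*} [Ring R] [AddCommGroup M] [Module R M] [AddCommGroup M₁]
  [Module R M₁] [AddCommGroup M₂] [Module R M₂]

theorem existsUnique_mem_sub_mem_of_isCompl {p q : Submodule R M} (h : IsCompl p q) (v : M) :
    ∃! d, d ∈ q ∧ v - d ∈ p := by
  obtain ⟨a, ha, b, hb, rfl⟩ := mem_sup.1 (h.sup_eq_top ▸ mem_top : v ∈ p ⊔ q)
  refine ⟨b, ⟨hb, by simpa using ha⟩, fun d ⟨hd, hvd⟩ => ?_⟩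
  rw [← sub_eq_zero]
  refine disjoint_def.1 h.disjoint _ ?_ (sub_mem hd hb)
  convert sub_mem ha hvd using 1
  abel

theorem isCompl_map_inr_of_mem_iff {W : Submodule R (M₁ × M₂)} {K P : Submodule R M₂}
    (f : M₁ → M₂) (hW : ∀ x y, (x, y) ∈ W ↔ y - f x ∈ K) (hKP : IsCompl K P) :
    IsCompl W (P.map (LinearMap.inr R M₁ M₂)) := by
  constructor
  · rw [disjoint_def]
    rintro _ hW' ⟨p, hp, rfl⟩
    have hpK : p ∈ K := by
      simpa using sub_mem ((hW 0 p).1 hW') ((hW 0 0).1 W.zero_mem)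
    simp [disjoint_def.1 hKP.disjoint p hpK hp]
  · rw [codisjoint_iff, eq_top_iff]
    rintro ⟨x, y⟩ -
    obtain ⟨k, hk, p, hp, hkp⟩ := mem_sup.1 (hKP.sup_eq_top ▸ mem_top : y - f x ∈ K ⊔ P)
    have hsplit : (x, y) = (x, y - p) + LinearMap.inr R M₁ M₂ p := by simp
    rw [hsplit]
    refine add_mem_sup ((hW _ _).2 ?_) (mem_map_of_mem hp)
    rwa [sub_right_comm, ← hkp, add_sub_cancel_right]

end Submodule

namespace Matrix

section Supported

variable {R : Type*} [Semiring R] {ι κ : Type*}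

def supportedOn (S : Set (ι × κ)) : Submodule R (Matrix ι κ R) where
  carrier := {A | ∀ i j, (i, j) ∉ S → A i j = 0}
  add_mem' hA hB i j h := by simp [hA i j h, hB i j h]
  zero_mem' _ _ _ := rfl
  smul_mem' c A hA i j h := by simp [hA i j h]

open scoped Classical in
def supportedOnEquiv (S : Set (ι × κ)) : supportedOn (R := R) S ≃ₗ[R] (S → R) where
  toFun A s := A.1 s.1.1 s.1.2
  invFun c := ⟨of fun i j => if h : (i, j) ∈ S then c ⟨_, h⟩ else 0, fun i j h => by simp [h]⟩
  map_add' _ _ := rfl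
  map_smul' _ _ := rfl
  left_inv A := Subtype.ext <| ext fun i j => by
    by_cases h : (i, j) ∈ S <;> simp [h, A.2 i j]
  right_inv c := funext fun s => by simp

lemma finrank_supportedOn [Fintype ι] [Fintype κ] [StrongRankCondition R]
    (S : Set (ι × κ)) : Module.finrank R (supportedOn (R := R) S) = Nat.card S := by
  classical
  rw [(supportedOnEquiv S).finrank_eq, Module.finrank_fintype_fun_eq_card,
    Nat.card_eq_fintype_card]

def leadingColumn (n m : ℕ) : Set (Fin n × Fin m) :=
  {pq | (pq.2 : ℕ) = 0 ∧ (pq.1 : ℕ) + 1 ≤ min n m}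

lemma card_leadingColumn (n m : ℕ) : Nat.card (leadingColumn n m) = min n m :=
  Nat.card_eq_of_equiv_fin
    { toFun p := ⟨p.1.1, by have := p.2.2; omega⟩
      invFun s := ⟨(⟨s, by have := s.2; omega⟩, ⟨0, by have := s.2; omega⟩), rfl, s.2⟩
      left_inv p := by
        obtain ⟨⟨i, j⟩, hj, -⟩ := p
        ext
        · rfl
        · exact hj.symm
      right_inv _ := rfl }

end Supported

variable {R : Type*} [CommRing R] {n m : ℕ}

variable (R) in
def nilpotentJordanBlock (n : ℕ) : Matrix (Fin n) (Fin n) R :=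
  of fun i j => if (j : ℕ) = i + 1 then 1 else 0

-- Indices are natural numbers so that shifting an index off the matrix is harmless: every entry
-- outside `Fin n × Fin m` is `0`.
def natEntry (A : Matrix (Fin n) (Fin m) R) (i j : ℕ) : R :=
  if h : i < n ∧ j < m then A ⟨i, h.1⟩ ⟨j, h.2⟩ else 0

def natSingle (n m a b : ℕ) (c : R) : Matrix (Fin n) (Fin m) R :=
  of fun i j => if (i : ℕ) = a ∧ (j : ℕ) = b then c else 0

lemma natEntry_coe (A : Matrix (Fin n) (Fin m) R) (i : Fin n) (j : Fin m) :
    natEntry A i j = A i j := by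
  simp [natEntry]

lemma natEntry_sub (A B : Matrix (Fin n) (Fin m) R) (i j : ℕ) :
    natEntry (A - B) i j = natEntry A i j - natEntry B i j := by
  unfold natEntry
  split_ifs <;> simp

lemma transpose_nilpotentJordanBlock_mul_apply (V : Matrix (Fin n) (Fin m) R)
    (i : Fin n) (j : Fin m) :
    ((nilpotentJordanBlock R n)ᵀ * V) i j = if (i : ℕ) = 0 then 0 else natEntry V (i - 1) j := by
  rw [mul_apply]
  split_ifs with hi
  · exact sum_eq_zero fun k _ => by simp [nilpotentJordanBlock, hi]
  · rw [sum_eq_single ⟨i - 1, by omega⟩]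
    · have : (i : ℕ) - 1 < n := by omega
      simp [nilpotentJordanBlock, natEntry, Nat.sub_add_cancel (Nat.pos_of_ne_zero hi), this]
    · intro k _ hk
      simp only [transpose_apply, nilpotentJordanBlock, of_apply]
      rw [if_neg (fun h => hk (Fin.ext (by simp; omega))), zero_mul]
    · simp

lemma mul_nilpotentJordanBlock_apply (V : Matrix (Fin n) (Fin m) R)
    (i : Fin n) (j : Fin m) :
    (V * nilpotentJordanBlock R m) i j = if (j : ℕ) = 0 then 0 else natEntry V i (j - 1) := by
  rw [mul_apply]
  split_ifs with hj
  · exact sum_eq_zero fun k _ => by simp [nilpotentJordanBlock, hj]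
  · rw [sum_eq_single ⟨j - 1, by omega⟩]
    · have : (j : ℕ) - 1 < m := by omega
      simp [nilpotentJordanBlock, natEntry, Nat.sub_add_cancel (Nat.pos_of_ne_zero hj), this]
    · intro k _ hk
      simp only [nilpotentJordanBlock, of_apply]
      rw [if_neg (fun h => hk (Fin.ext (by simp; omega))), mul_zero]
    · simp

lemma natEntry_transpose_nilpotentJordanBlock_mul_zero (V : Matrix (Fin n) (Fin m) R) (j : ℕ) :
    natEntry ((nilpotentJordanBlock R n)ᵀ * V) 0 j = 0 := by
  unfold natEntry
  split_ifs with h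
  · simp [transpose_nilpotentJordanBlock_mul_apply]
  · rfl

lemma natEntry_transpose_nilpotentJordanBlock_mul_succ (V : Matrix (Fin n) (Fin m) R)
    {i : ℕ} (hi : i + 1 < n) (j : ℕ) :
    natEntry ((nilpotentJordanBlock R n)ᵀ * V) (i + 1) j = natEntry V i j := by
  by_cases hj : j < m
  · simp [natEntry, hi, hj, transpose_nilpotentJordanBlock_mul_apply]
  · simp [natEntry, hj]

lemma natEntry_mul_nilpotentJordanBlock_zero (V : Matrix (Fin n) (Fin m) R) (i : ℕ) :
    natEntry (V * nilpotentJordanBlock R m) i 0 = 0 := by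
  unfold natEntry
  split_ifs with h
  · simp [mul_nilpotentJordanBlock_apply]
  · rfl

lemma natEntry_mul_nilpotentJordanBlock_succ (V : Matrix (Fin n) (Fin m) R)
    (i : ℕ) {j : ℕ} (hj : j + 1 < m) :
    natEntry (V * nilpotentJordanBlock R m) i (j + 1) = natEntry V i j := by
  by_cases hi : i < n
  · simp [natEntry, hi, hj, mul_nilpotentJordanBlock_apply]
  · simp [natEntry, hi]

def jordanSylvester (n m : ℕ) : Matrix (Fin n) (Fin m) R →ₗ[R] Matrix (Fin n) (Fin m) R where
  toFun (V : Matrix (Fin n) (Fin m) R) :=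
    (nilpotentJordanBlock R n)ᵀ * V - V * nilpotentJordanBlock R m
  map_add' V W := by simp only [Matrix.mul_add, Matrix.add_mul]; abel
  map_smul' c V := by simp only [Matrix.mul_smul, Matrix.smul_mul, smul_sub, RingHom.id_apply]

lemma jordanSylvester_apply (V : Matrix (Fin n) (Fin m) R) :
    jordanSylvester n m V = (nilpotentJordanBlock R n)ᵀ * V - V * nilpotentJordanBlock R m :=
  rfl

lemma sum_antidiagonal_natEntry_jordanSylvester (V : Matrix (Fin n) (Fin m) R) {s : ℕ}
    (hs : s < min n m) :
    ∑ p ∈ antidiagonal s, natEntry (jordanSylvester n m V) p.1 p.2 = 0 := by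
  simp only [jordanSylvester_apply, natEntry_sub, sum_sub_distrib]
  cases s with
  | zero => simp [natEntry_transpose_nilpotentJordanBlock_mul_zero,
      natEntry_mul_nilpotentJordanBlock_zero]
  | succ s =>
    rw [Nat.sum_antidiagonal_succ, Nat.sum_antidiagonal_succ',
      natEntry_transpose_nilpotentJordanBlock_mul_zero, natEntry_mul_nilpotentJordanBlock_zero,
      zero_add, zero_add, sub_eq_zero]
    refine sum_congr rfl fun p hp => ?_
    rw [HasAntidiagonal.mem_antidiagonal] at hp
    rw [natEntry_transpose_nilpotentJordanBlock_mul_succ V (by omega),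
      natEntry_mul_nilpotentJordanBlock_succ V _ (by omega)]

lemma disjoint_range_jordanSylvester_supportedOn_leadingColumn :
    Disjoint (LinearMap.range (jordanSylvester (R := R) n m))
      (supportedOn (leadingColumn n m)) := by
  rw [Submodule.disjoint_def]
  rintro _ ⟨V, rfl⟩ hV
  ext i j
  by_cases hij : (i, j) ∈ leadingColumn n m
  · obtain ⟨hj, hi⟩ : (j : ℕ) = 0 ∧ (i : ℕ) + 1 ≤ min n m := hij
    have hsum := sum_antidiagonal_natEntry_jordanSylvester V (s := i) (by omega)
    rw [sum_eq_single ((i : ℕ), 0) ?_ (by simp)] at hsum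
    · calc _ = natEntry (jordanSylvester n m V) i 0 := by rw [← hj, natEntry_coe]
        _ = 0 := hsum
    · rintro ⟨a, b⟩ hab hne
      unfold natEntry
      split_ifs with h
      · refine hV _ _ fun hmem => hne ?_
        obtain rfl : b = 0 := hmem.1
        rw [HasAntidiagonal.mem_antidiagonal, add_zero] at hab
        simpa using hab
      · rfl
  · exact hV i j hij

lemma transpose_nilpotentJordanBlock_mul_natSingle (a b : ℕ) (c : R) :
    (nilpotentJordanBlock R n)ᵀ * natSingle n m a b c = natSingle n m (a + 1) b c := by
  ext i j
  rw [transpose_nilpotentJordanBlock_mul_apply]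
  simp only [natSingle, natEntry, of_apply]
  split_ifs <;> first | rfl | omega

lemma natSingle_mul_nilpotentJordanBlock (a b : ℕ) (c : R) :
    natSingle n m a b c * nilpotentJordanBlock R m = natSingle n m a (b + 1) c := by
  ext i j
  rw [mul_nilpotentJordanBlock_apply]
  simp only [natSingle, natEntry, of_apply]
  split_ifs <;> first | rfl | omega

lemma jordanSylvester_natSingle (a b : ℕ) (c : R) :
    jordanSylvester n m (natSingle n m a b c) =
      natSingle n m (a + 1) b c - natSingle n m a (b + 1) c := by
  rw [jordanSylvester_apply, transpose_nilpotentJordanBlock_mul_natSingle,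
    natSingle_mul_nilpotentJordanBlock]

lemma natSingle_eq_zero {a b : ℕ} (h : n ≤ a ∨ m ≤ b) (c : R) : natSingle n m a b c = 0 := by
  ext i j
  have := i.isLt
  have := j.isLt
  simp only [natSingle, of_apply, zero_apply]
  rw [if_neg (by omega)]

lemma single_eq_natSingle (i : Fin n) (j : Fin m) (c : R) :
    single i j c = natSingle n m i j c := by
  ext i' j'
  simp [single_apply, natSingle, Fin.ext_iff, eq_comm]

lemma natSingle_sub_natSingle_mem_range_jordanSylvester (a b : ℕ) (c : R) :
    natSingle n m a b c - natSingle n m (a + b) 0 c ∈ LinearMap.range (jordanSylvester n m) := by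
  induction b generalizing a with
  | zero => simp
  | succ b ih =>
    have key := sub_mem (ih (a + 1))
      (LinearMap.mem_range_self (jordanSylvester n m) (natSingle n m a b c))
    rw [jordanSylvester_natSingle, add_right_comm] at key
    convert key using 1
    abel

lemma natSingle_mem_supportedOn_leadingColumn {s : ℕ} (hs : s < min n m) (c : R) :
    natSingle n m s 0 c ∈ supportedOn (leadingColumn n m) := by
  intro i j hij
  simp only [natSingle, of_apply]
  rw [if_neg]
  rintro ⟨rfl, hj⟩
  exact hij ⟨hj, hs⟩

lemma natSingle_mem_range_jordanSylvester_sup_supportedOn (a b : ℕ) (c : R) :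
    natSingle n m a b c ∈
      LinearMap.range (jordanSylvester n m) ⊔ supportedOn (leadingColumn n m) := by
  have hcol : natSingle n m (a + b) 0 c ∈
      LinearMap.range (jordanSylvester n m) ⊔ supportedOn (leadingColumn n m) := by
    rcases lt_or_ge (a + b) (min n m) with hs | hs
    · exact Submodule.mem_sup_right (natSingle_mem_supportedOn_leadingColumn hs c)
    rcases min_le_iff.1 hs with hn | hm
    · rw [natSingle_eq_zero (Or.inl hn)]
      exact zero_mem _
    · -- `E_{s,0} ≡ E_{s-m,m}` modulo the image, and column `m` lies outside the matrix
      have h := natSingle_sub_natSingle_mem_range_jordanSylvester (n := n) (m := m) (a + b - m) m c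
      rw [natSingle_eq_zero (Or.inr le_rfl), zero_sub, neg_mem_iff, Nat.sub_add_cancel hm] at h
      exact Submodule.mem_sup_left h
  simpa using add_mem (Submodule.mem_sup_left
    (natSingle_sub_natSingle_mem_range_jordanSylvester a b c)) hcol

lemma sup_range_jordanSylvester_supportedOn_leadingColumn :
    LinearMap.range (jordanSylvester (R := R) n m) ⊔ supportedOn (leadingColumn n m) = ⊤ := by
  refine eq_top_iff.2 fun A _ => ?_
  rw [matrix_eq_sum_single A]
  refine sum_mem fun i _ => sum_mem fun j _ => ?_
  rw [single_eq_natSingle]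
  exact natSingle_mem_range_jordanSylvester_sup_supportedOn _ _ _

lemma isCompl_range_jordanSylvester_supportedOn_leadingColumn :
    IsCompl (LinearMap.range (jordanSylvester (R := R) n m)) (supportedOn (leadingColumn n m)) :=
  ⟨disjoint_range_jordanSylvester_supportedOn_leadingColumn,
    codisjoint_iff.2 sup_range_jordanSylvester_supportedOn_leadingColumn⟩

end Matrix

open Matrix

variable {n m : ℕ}

lemma delM_mul_apply (A : Matrix (Fin n) (Fin m) ℂ) (i : Fin n) (j : Fin m) :
    (delM n * A) i j = A i.rev j := by
  have := i.isLt
  rw [mul_apply, sum_eq_single i.rev]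
  · rw [delM, of_apply, if_pos (by rw [Fin.val_rev]; omega), one_mul]
  · intro k _ hk
    rw [delM, of_apply, if_neg, zero_mul]
    exact fun h => hk (Fin.ext (by rw [Fin.val_rev]; omega))
  · simp

lemma delM_mul_delM_mul (A : Matrix (Fin n) (Fin m) ℂ) : delM n * (delM n * A) = A := by
  ext i j
  rw [delM_mul_apply, delM_mul_apply, Fin.rev_rev]

lemma delM_mul_delM (n : ℕ) : delM n * delM n = 1 := by
  simpa using delM_mul_delM_mul (1 : Matrix (Fin n) (Fin n) ℂ)

lemma lamM_eq_smul_delM_add_delM_mul (n : ℕ) (lam : ℂ) :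
    lamM n lam = lam • delM n + delM n * nilpotentJordanBlock ℂ n := by
  ext i j
  have := i.isLt
  have := j.isLt
  rw [Matrix.add_apply, Matrix.smul_apply, delM_mul_apply]
  simp only [lamM, delM, nilpotentJordanBlock, of_apply, Fin.val_rev, smul_eq_mul]
  split_ifs <;> first | omega | simp

lemma lamM_eq_smul_delM_add_transpose_mul_delM (n : ℕ) (lam : ℂ) :
    lamM n lam = lam • delM n + (nilpotentJordanBlock ℂ n)ᵀ * delM n := by
  conv_lhs => rw [← (lamM_isSymm n lam).eq, lamM_eq_smul_delM_add_delM_mul]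
  rw [transpose_add, transpose_smul, transpose_mul, (delM_isSymm n).eq]

lemma mem_WSpace_delM_lamM_iff (lam : ℂ) (X Y : Matrix (Fin n) (Fin m) ℂ) :
    (X, Y) ∈ WSpace (delM n) (lamM n lam) (delM m) (lamM m lam) ↔
      Y - (lam • X + X * nilpotentJordanBlock ℂ m) ∈ LinearMap.range (jordanSylvester n m) := by
  simp only [WSpace, LinearMap.mem_range, offMap, LinearMap.coe_mk, AddHom.coe_mk, Prod.mk.injEq,
    jordanSylvester_apply, Prod.exists]
  constructor
  · rintro ⟨S, R, rfl, rfl⟩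
    refine ⟨delM n * S, ?_⟩
    rw [lamM_eq_smul_delM_add_delM_mul m, lamM_eq_smul_delM_add_transpose_mul_delM n]
    simp only [Matrix.mul_add, Matrix.add_mul, Matrix.mul_smul, Matrix.smul_mul,
      Matrix.mul_assoc, smul_add]
    abel
  · rintro ⟨V, hV⟩
    refine ⟨delM n * V, ((X - V) * delM m)ᵀ, ?_, ?_⟩
    · rw [transpose_transpose, Matrix.mul_assoc, delM_mul_delM, Matrix.mul_one,
        delM_mul_delM_mul, sub_add_cancel]
    · rw [eq_sub_iff_add_eq'] at hV
      rw [← hV, transpose_transpose, lamM_eq_smul_delM_add_delM_mul m,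
        lamM_eq_smul_delM_add_transpose_mul_delM n]
      simp only [Matrix.mul_add, Matrix.add_mul, Matrix.mul_smul, Matrix.smul_mul,
        Matrix.mul_assoc, delM_mul_delM, delM_mul_delM_mul, Matrix.mul_one, Matrix.sub_mul,
        smul_sub]
      abel

lemma entryPattern_empty_eq_map_inr (S : Set (Fin n × Fin m)) :
    entryPattern ∅ S = (supportedOn S).map (LinearMap.inr ℂ _ _) := by
  ext ⟨X, Y⟩
  simp [entryPattern, supportedOn]
  exact and_congr ⟨ext, by rintro rfl _ _; rfl⟩ Iff.rfl

theorem H_H_offdiagonal_equal_eigenvalues_general (n m : ℕ) (lam : ℂ) :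
    Disjoint (WSpace (delM n) (lamM n lam) (delM m) (lamM m lam))
      (entryPattern (∅ : Set (Fin n × Fin m))
        {pq : Fin n × Fin m | (pq.2 : ℕ) = 0 ∧ (pq.1 : ℕ) + 1 ≤ min n m}) ∧
    WSpace (delM n) (lamM n lam) (delM m) (lamM m lam) ⊔
      entryPattern (∅ : Set (Fin n × Fin m))
        {pq : Fin n × Fin m | (pq.2 : ℕ) = 0 ∧ (pq.1 : ℕ) + 1 ≤ min n m} = ⊤ ∧
    (∀ v : Matrix (Fin n) (Fin m) ℂ × Matrix (Fin n) (Fin m) ℂ, ∃! d,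
      d ∈ entryPattern (∅ : Set (Fin n × Fin m))
        {pq : Fin n × Fin m | (pq.2 : ℕ) = 0 ∧ (pq.1 : ℕ) + 1 ≤ min n m} ∧
      v - d ∈ WSpace (delM n) (lamM n lam) (delM m) (lamM m lam)) ∧
    Module.finrank ℂ
      ((Matrix (Fin n) (Fin m) ℂ × Matrix (Fin n) (Fin m) ℂ) ⧸
        WSpace (delM n) (lamM n lam) (delM m) (lamM m lam)) = min n m := by
  have hP : entryPattern ∅ (leadingColumn n m) = (supportedOn (leadingColumn n m)).map
      (LinearMap.inr ℂ (Matrix (Fin n) (Fin m) ℂ) (Matrix (Fin n) (Fin m) ℂ)) :=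
    entryPattern_empty_eq_map_inr _
  have hc : IsCompl (WSpace (delM n) (lamM n lam) (delM m) (lamM m lam))
      (entryPattern ∅ (leadingColumn n m)) := by
    rw [hP]
    exact Submodule.isCompl_map_inr_of_mem_iff _ (mem_WSpace_delM_lamM_iff lam)
      isCompl_range_jordanSylvester_supportedOn_leadingColumn
  refine ⟨hc.disjoint, hc.sup_eq_top, Submodule.existsUnique_mem_sub_mem_of_isCompl hc, ?_⟩
  rw [(Submodule.quotientEquivOfIsCompl _ _ hc).finrank_eq, hP,
    ← (Submodule.equivMapOfInjective _ LinearMap.inr_injective _).finrank_eq,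
    finrank_supportedOn, card_leadingColumn]

/-- **Off-diagonal blocks `H_n(λ)` vs `H_m(λ)`.** With
`W = {(Rᵀ Δ_m + Δ_n S, Rᵀ Λ_m(λ) + Λ_n(λ) S)}` and `P` the pairs `(0, Y)` with `Y`
supported on the first column, rows `1, …, min(n,m)`, one has
`ℂ^{n×m} × ℂ^{n×m} = W ⊕ P`; in particular every coset of `W` contains exactly one
element of `P`, and `W` has codimension `min(n,m)`. -/
theorem H_H_offdiagonal_equal_eigenvalues (n m : ℕ) (hn : 0 < n) (hm : 0 < m) (lam : ℂ) :
    Disjoint (WSpace (delM n) (lamM n lam) (delM m) (lamM m lam))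
      (entryPattern (∅ : Set (Fin n × Fin m))
        {pq : Fin n × Fin m | (pq.2 : ℕ) = 0 ∧ (pq.1 : ℕ) + 1 ≤ min n m}) ∧
    WSpace (delM n) (lamM n lam) (delM m) (lamM m lam) ⊔
      entryPattern (∅ : Set (Fin n × Fin m))
        {pq : Fin n × Fin m | (pq.2 : ℕ) = 0 ∧ (pq.1 : ℕ) + 1 ≤ min n m} = ⊤ ∧
    (∀ v : Matrix (Fin n) (Fin m) ℂ × Matrix (Fin n) (Fin m) ℂ, ∃! d,
      d ∈ entryPattern (∅ : Set (Fin n × Fin m))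
        {pq : Fin n × Fin m | (pq.2 : ℕ) = 0 ∧ (pq.1 : ℕ) + 1 ≤ min n m} ∧
      v - d ∈ WSpace (delM n) (lamM n lam) (delM m) (lamM m lam)) ∧
    Module.finrank ℂ
      ((Matrix (Fin n) (Fin m) ℂ × Matrix (Fin n) (Fin m) ℂ) ⧸
        WSpace (delM n) (lamM n lam) (delM m) (lamM m lam)) = min n m :=
  H_H_offdiagonal_equal_eigenvalues_general n m lam

end
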